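/- Under assumptions (f₁)–(f₄), every Palais–Smale sequence (u_n) ⊂ 𝒩 for Φ (i.e., sup Φ(u_n) < ∞, Φ′(u_n) → 0) is bounded in H¹₀(Ω). -/

import Mathlib

/-!
On the Nehari manifold `Φ'(u) u = 0`, so `Φ(u) = Φ(u) - ¼ Φ'(u) u`, and (f₄) makes the nonlinear
part of this expression nonnegative; hence `Φ(u) ≥ (a/4) ‖u‖²` and a bound on `Φ(u_n)` bounds
`‖u_n‖`. Since no formula for `Φ'` is available, `Φ'(u) u` is read off as the derivative at
`t = 1` of `t ↦ Φ(t u)`: (f₄) gives `F(x, t v) ≤ t⁴ F(x, v)` for `0 < t ≤ 1`, so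
`J(t u) = ∫_Ω F(x, t u)` lies below `t⁴ J(u)` and its derivative at `1` is at least `4 J(u)`.
-/

open MeasureTheory Set Filter Topology

section Primitive

variable {φ : ℝ → ℝ}

theorem mul_apply_nonneg_of_div_pow_three_pos (hpos : ∀ s ≠ 0, 0 < φ s / s ^ 3) (s : ℝ) :
    0 ≤ s * φ s := by
  rcases eq_or_ne s 0 with rfl | hs
  · simp
  calc 0 ≤ s ^ 4 * (φ s / s ^ 3) := by have := hpos s hs; positivity
    _ = s * φ s := by field_simp

theorem mul_apply_mul_le_of_div_pow_three_mono
    (hmono : MonotoneOn (fun s => φ s / s ^ 3) (Ioi 0))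
    (hanti : AntitoneOn (fun s => φ s / s ^ 3) (Iio 0))
    {t : ℝ} (ht : t ∈ Ioc 0 1) (r : ℝ) : r * φ (t * r) ≤ t ^ 3 * (r * φ r) := by
  obtain ⟨ht0, ht1⟩ := ht
  rcases eq_or_ne r 0 with rfl | hr
  · simp
  have hle : φ (t * r) / (t * r) ^ 3 ≤ φ r / r ^ 3 := by
    rcases hr.lt_or_gt with hr | hr
    · exact hanti hr (mul_neg_of_pos_of_neg ht0 hr) (by nlinarith)
    · exact hmono (mul_pos ht0 hr) hr (by nlinarith)
  calc r * φ (t * r) = t ^ 3 * r ^ 4 * (φ (t * r) / (t * r) ^ 3) := by field_simp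
    _ ≤ t ^ 3 * r ^ 4 * (φ r / r ^ 3) := by gcongr
    _ = t ^ 3 * (r * φ r) := by field_simp

theorem integral_eq_integral_unitInterval (v : ℝ) :
    ∫ s in (0:ℝ)..v, φ s = ∫ s in (0:ℝ)..1, v * φ (v * s) := by
  rw [intervalIntegral.integral_const_mul, ← smul_eq_mul,
    intervalIntegral.smul_integral_comp_mul_left, mul_zero, mul_one]

theorem integral_nonneg_of_div_pow_three_pos (hpos : ∀ s ≠ 0, 0 < φ s / s ^ 3) (v : ℝ) :
    0 ≤ ∫ s in (0:ℝ)..v, φ s := by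
  rw [integral_eq_integral_unitInterval, intervalIntegral.integral_of_le zero_le_one]
  refine setIntegral_nonneg measurableSet_Ioc fun s hs => nonneg_of_mul_nonneg_left ?_ hs.1
  simpa only [mul_right_comm v] using mul_apply_nonneg_of_div_pow_three_pos hpos (v * s)

theorem integral_mul_le_pow_four_mul (hφ : Continuous φ)
    (hmono : MonotoneOn (fun s => φ s / s ^ 3) (Ioi 0))
    (hanti : AntitoneOn (fun s => φ s / s ^ 3) (Iio 0))
    {t : ℝ} (ht : t ∈ Ioc 0 1) (v : ℝ) :
    ∫ s in (0:ℝ)..t * v, φ s ≤ t ^ 4 * ∫ s in (0:ℝ)..v, φ s := by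
  rw [integral_eq_integral_unitInterval (t * v), integral_eq_integral_unitInterval v,
    ← intervalIntegral.integral_const_mul]
  refine intervalIntegral.integral_mono_on_of_le_Ioo zero_le_one
    (Continuous.intervalIntegrable (by fun_prop) _ _)
    (Continuous.intervalIntegrable (by fun_prop) _ _) fun s hs => ?_
  refine le_of_mul_le_mul_left ?_ hs.1
  have h := mul_apply_mul_le_of_div_pow_three_mono hmono hanti ht (v * s)
  calc s * (t * v * φ (t * v * s)) = t * (v * s * φ (t * (v * s))) := by ring_nf
    _ ≤ t * (t ^ 3 * (v * s * φ (v * s))) := by gcongr; exact ht.1.le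
    _ = s * (t ^ 4 * (v * φ (v * s))) := by ring

end Primitive

theorem natCast_mul_le_of_hasDerivAt_of_le_pow_mul {G : ℝ → ℝ} {G' : ℝ} (n : ℕ)
    (hG : HasDerivAt G G' 1) (hle : ∀ t ∈ Ioo (0:ℝ) 1, G t ≤ t ^ n * G 1) :
    n * G 1 ≤ G' := by
  have hgap : HasDerivAt (fun t => t ^ n * G 1 - G t) (n * G 1 - G') 1 :=
    (((hasDerivAt_pow n (1:ℝ)).mul_const (G 1)).sub hG).congr_deriv (by simp)
  have hslope : ∀ t ∈ Ioo (0:ℝ) 1, slope (fun t => t ^ n * G 1 - G t) 1 t ≤ 0 := by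
    intro t ht
    rw [slope_def_field, one_pow, one_mul, sub_self]
    exact div_nonpos_of_nonneg_of_nonpos (by linarith [hle t ht]) (by linarith [ht.2])
  have := le_of_tendsto (hasDerivAt_iff_tendsto_slope_left_right.mp hgap).1
    (eventually_of_mem (Ioo_mem_nhdsLT zero_lt_one) hslope)
  linarith

section Nehari

variable {X : Type*} [NormedAddCommGroup X] [NormedSpace ℝ X]
  {Φ : X → ℝ} {Φ' : X →L[ℝ] ℝ} {w : X} {a b : ℝ}

theorem quarter_mul_norm_sq_le_of_le_pow_four_mul {J : X → ℝ}
    (hΦ : ∀ t : ℝ, Φ (t • w) = a / 2 * ‖t • w‖ ^ 2 + b / 4 * ‖t • w‖ ^ 4 - J (t • w))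
    (hΦ' : HasFDerivAt Φ Φ' w) (hw : Φ' w = 0)
    (hJ : ∀ t ∈ Ioo (0:ℝ) 1, J (t • w) ≤ t ^ 4 * J w) :
    a / 4 * ‖w‖ ^ 2 ≤ Φ w := by
  have hJray : ∀ t : ℝ,
      J (t • w) = a / 2 * ‖w‖ ^ 2 * t ^ 2 + b / 4 * ‖w‖ ^ 4 * t ^ 4 - Φ (t • w) := by
    intro t
    rw [hΦ, norm_smul, Real.norm_eq_abs, mul_pow, mul_pow, sq_abs, (by decide : Even 4).pow_abs]
    ring
  have hray : HasDerivAt (fun t : ℝ => Φ (t • w)) 0 1 := by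
    have := hΦ'.comp_hasDerivAt_of_eq 1 ((hasDerivAt_id' 1).smul_const w) (one_smul ℝ w).symm
    simpa [Function.comp_def, hw] using this
  have hderiv : HasDerivAt (fun t : ℝ => J (t • w)) (a * ‖w‖ ^ 2 + b * ‖w‖ ^ 4) 1 := by
    simp only [hJray]
    exact ((((hasDerivAt_pow 2 (1:ℝ)).const_mul (a / 2 * ‖w‖ ^ 2)).add
      ((hasDerivAt_pow 4 (1:ℝ)).const_mul (b / 4 * ‖w‖ ^ 4))).sub hray).congr_deriv
      (by norm_num; ring)
  have h4J := natCast_mul_le_of_hasDerivAt_of_le_pow_mul 4 hderiv (by simpa using hJ)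
  have hΦw := hΦ 1
  simp only [one_smul] at h4J hΦw
  push_cast at h4J
  linarith

theorem quarter_mul_norm_sq_le_of_hasFDerivAt_apply_self_eq_zero
    {E : Type*} [MeasurableSpace E] {μ : Measure E} {Ω : Set E}
    {T : X →ₗ[ℝ] (E → ℝ)} {F : E → ℝ → ℝ} (ha : 0 ≤ a) (hb : 0 ≤ b)
    (hF : ∀ x ∈ Ω, ∀ v, 0 ≤ F x v)
    (hFscale : ∀ x ∈ Ω, ∀ v, ∀ t ∈ Ioc (0:ℝ) 1, F x (t * v) ≤ t ^ 4 * F x v)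
    (hΦ : ∀ u, Φ u = a / 2 * ‖u‖ ^ 2 + b / 4 * ‖u‖ ^ 4 - ∫ x in Ω, F x (T u x) ∂μ)
    (hΦ' : HasFDerivAt Φ Φ' w) (hw : Φ' w = 0) :
    a / 4 * ‖w‖ ^ 2 ≤ Φ w := by
  by_cases hint : IntegrableOn (fun x => F x (T w x)) Ω μ
  · refine quarter_mul_norm_sq_le_of_le_pow_four_mul (J := fun u => ∫ x in Ω, F x (T u x) ∂μ)
      (fun t => hΦ _) hΦ' hw fun t ht => ?_
    simp only [map_smul, Pi.smul_apply, smul_eq_mul, ← integral_const_mul]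
    exact setIntegral_mono_of_nonneg (fun x hx => hF x hx _)
      (fun x hx => hFscale x hx _ t (Ioo_subset_Ioc_self ht)) (hint.const_mul _)
  · rw [hΦ, integral_undef hint]
    linarith [mul_nonneg ha (sq_nonneg ‖w‖), mul_nonneg hb (pow_nonneg (norm_nonneg w) 4)]

end Nehari

theorem palais_smale_sequences_bounded_general
    -- `X` plays the role of the Sobolev space `H¹₀(Ω)`, with `‖u‖² = ∫_Ω |∇u|²`,
    -- and `T u` is the function on `Ω` represented by `u ∈ X`.
    {X : Type*} [NormedAddCommGroup X] [InnerProductSpace ℝ X]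
    {N : ℕ}
    (Ω : Set (EuclideanSpace ℝ (Fin N)))
    (T : X →ₗ[ℝ] (EuclideanSpace ℝ (Fin N) → ℝ))
    (a b : ℝ) (ha : 0 < a) (hb : 0 < b)
    (f F : EuclideanSpace ℝ (Fin N) → ℝ → ℝ)
    (hF : ∀ x u, F x u = ∫ s in (0:ℝ)..u, f x s)
    -- (f₁): continuity and subcritical growth
    (hf1 : Continuous fun q : EuclideanSpace ℝ (Fin N) × ℝ => f q.1 q.2)
    -- (f₄): u ↦ f(x,u)/u³ positive for u ≠ 0, nonincreasing on (−∞,0),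
    -- nondecreasing on (0,∞)
    (hf4pos : ∀ x ∈ closure Ω, ∀ u : ℝ, u ≠ 0 → 0 < f x u / u ^ 3)
    (hf4mono : ∀ x ∈ closure Ω,
      MonotoneOn (fun u => f x u / u ^ 3) (Set.Ioi (0:ℝ)))
    (hf4anti : ∀ x ∈ closure Ω,
      AntitoneOn (fun u => f x u / u ^ 3) (Set.Iio (0:ℝ)))
    -- the energy functional
    (Φ : X → ℝ)
    (hΦ : ∀ u : X, Φ u = a / 2 * ‖u‖ ^ 2 + b / 4 * ‖u‖ ^ 4
      - ∫ x in Ω, F x (T u x))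
    (Φ' : X → X →L[ℝ] ℝ) (hΦ' : ∀ u : X, HasFDerivAt Φ (Φ' u) u) :
    ∀ u : ℕ → X, (∀ n, u n ≠ 0 ∧ Φ' (u n) (u n) = 0) →
      (∃ d : ℝ, ∀ n, Φ (u n) ≤ d) →
      Filter.Tendsto (fun n => ‖Φ' (u n)‖) Filter.atTop (nhds 0) →
      ∃ C : ℝ, ∀ n, ‖u n‖ ≤ C := by
  intro u hNehari ⟨d, hd⟩ _
  have hFnonneg : ∀ x ∈ Ω, ∀ v, 0 ≤ F x v := fun x hx v =>
    hF x v ▸ integral_nonneg_of_div_pow_three_pos (hf4pos x (subset_closure hx)) v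
  have hFscale : ∀ x ∈ Ω, ∀ v, ∀ t ∈ Ioc (0:ℝ) 1, F x (t * v) ≤ t ^ 4 * F x v :=
    fun x hx v t ht => by
      rw [hF, hF]
      exact integral_mul_le_pow_four_mul (hf1.comp (continuous_const.prodMk continuous_id))
        (hf4mono x (subset_closure hx)) (hf4anti x (subset_closure hx)) ht v
  refine ⟨√(4 * d / a), fun n => Real.le_sqrt_of_sq_le ?_⟩
  have hbound := quarter_mul_norm_sq_le_of_hasFDerivAt_apply_self_eq_zero ha.le hb.le
    hFnonneg hFscale hΦ (hΦ' (u n)) (hNehari n).2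
  rw [le_div_iff₀ ha]
  linarith [hd n]

theorem palais_smale_sequences_bounded
    -- `X` plays the role of the Sobolev space `H¹₀(Ω)`, with `‖u‖² = ∫_Ω |∇u|²`,
    -- and `T u` is the function on `Ω` represented by `u ∈ X`.
    {X : Type*} [NormedAddCommGroup X] [InnerProductSpace ℝ X] [CompleteSpace X]
    {N : ℕ} (hN : 1 ≤ N ∧ N ≤ 3)
    (Ω : Set (EuclideanSpace ℝ (Fin N)))
    (hΩopen : IsOpen Ω) (hΩbdd : Bornology.IsBounded Ω)
    (T : X →ₗ[ℝ] (EuclideanSpace ℝ (Fin N) → ℝ))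
    (a b : ℝ) (ha : 0 < a) (hb : 0 < b)
    (f F : EuclideanSpace ℝ (Fin N) → ℝ → ℝ)
    (hF : ∀ x u, F x u = ∫ s in (0:ℝ)..u, f x s)
    (c p : ℝ) (hc : 0 < c) (hp : 4 < p) (hp3 : N = 3 → p < 6)
    -- (f₁): continuity and subcritical growth
    (hf1 : Continuous fun q : EuclideanSpace ℝ (Fin N) × ℝ => f q.1 q.2)
    (hf1' : ∀ x ∈ closure Ω, ∀ u : ℝ, |f x u| ≤ c * (1 + |u| ^ (p - 1)))
    -- (f₂): f(x,u) = o(u) as u → 0, uniformly in x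
    (hf2 : ∀ ε : ℝ, 0 < ε → ∃ δ : ℝ, 0 < δ ∧
      ∀ x ∈ closure Ω, ∀ u : ℝ, |u| ≤ δ → |f x u| ≤ ε * |u|)
    -- (f₃): F(x,u)/u⁴ → ∞ as |u| → ∞, uniformly in x
    (hf3 : ∀ M : ℝ, ∃ R : ℝ, 0 < R ∧
      ∀ x ∈ closure Ω, ∀ u : ℝ, R ≤ |u| → M ≤ F x u / u ^ 4)
    -- (f₄): u ↦ f(x,u)/u³ positive for u ≠ 0, nonincreasing on (−∞,0),
    -- nondecreasing on (0,∞)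
    (hf4pos : ∀ x ∈ closure Ω, ∀ u : ℝ, u ≠ 0 → 0 < f x u / u ^ 3)
    (hf4mono : ∀ x ∈ closure Ω,
      MonotoneOn (fun u => f x u / u ^ 3) (Set.Ioi (0:ℝ)))
    (hf4anti : ∀ x ∈ closure Ω,
      AntitoneOn (fun u => f x u / u ^ 3) (Set.Iio (0:ℝ)))
    -- the energy functional
    (Φ : X → ℝ)
    (hΦ : ∀ u : X, Φ u = a / 2 * ‖u‖ ^ 2 + b / 4 * ‖u‖ ^ 4
      - ∫ x in Ω, F x (T u x))
    (Φ' : X → X →L[ℝ] ℝ) (hΦ' : ∀ u : X, HasFDerivAt Φ (Φ' u) u) :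
    ∀ u : ℕ → X, (∀ n, u n ≠ 0 ∧ Φ' (u n) (u n) = 0) →
      (∃ d : ℝ, ∀ n, Φ (u n) ≤ d) →
      Filter.Tendsto (fun n => ‖Φ' (u n)‖) Filter.atTop (nhds 0) →
      ∃ C : ℝ, ∀ n, ‖u n‖ ≤ C :=
  palais_smale_sequences_bounded_general Ω T a b ha hb f F hF hf1 hf4pos hf4mono hf4anti Φ hΦ Φ' hΦ'
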